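/- Let γ ∈ (0,1) and suppose the per-step costs satisfy c(m, m̂, a) ≤ K_c·‖m − m̂‖_∞ (Lipschitz cost with zero cost at zero error) and the no-collection error satisfies the recursion of Theorem 7 with bound B := γK_c·δ/((1−γ)(1−γK_p)). If the cost of collecting data satisfies ℓ > B at every step, then the strategy of never collecting data achieves total discounted cost at most B, while any strategy that collects at least once incurs total cost strictly greater than B before accounting for estimation costs after the first collection; hence never collecting is optimal. -/

import Mathlib

/-!
Write `S N = ∑_{t<N} γ^t e(t+1)`. Shifting the index once and applying the recursion
`e(t+2) ≤ Kp e(t+1) + δ` termwise gives `S (N+1) ≤ γ Kp S N + γ δ/(1-γ)`, since `e 1 = 0`.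
As `e ≥ 0`, `S N ≤ S (N+1)`, so `(1 - γ Kp) S N ≤ γ δ/(1-γ)` and every partial sum is at most
`γ δ/((1-γ)(1-γ Kp))`. The costs add the factor `Kc`, which gives the bound `B` on the
never-collect cost; any strategy that collects pays at least `ℓ > B`.
-/

open Finset

section DiscountedSum

variable {K : Type*} [Field K] [LinearOrder K] [IsStrictOrderedRing K]
  {γ a δ : K} {f : ℕ → K}

lemma sum_range_pow_le_inv_one_sub (hγ0 : 0 ≤ γ) (hγ1 : γ < 1) (N : ℕ) :
    ∑ t ∈ range N, γ ^ t ≤ 1 / (1 - γ) := by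
  simpa using geom_sum_Ico_le_of_lt_one (m := 0) (n := N) hγ0 hγ1

lemma discounted_sum_succ_le (hγ0 : 0 ≤ γ) (hγ1 : γ < 1) (hδ : 0 ≤ δ) (hf0 : f 0 = 0)
    (hrec : ∀ t, f (t + 1) ≤ a * f t + δ) (N : ℕ) :
    ∑ t ∈ range (N + 1), γ ^ t * f t ≤
      γ * a * ∑ t ∈ range N, γ ^ t * f t + γ * δ / (1 - γ) := by
  have hgeom : γ * δ * ∑ t ∈ range N, γ ^ t ≤ γ * δ / (1 - γ) :=
    (mul_le_mul_of_nonneg_left (sum_range_pow_le_inv_one_sub hγ0 hγ1 N)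
      (mul_nonneg hγ0 hδ)).trans_eq (by ring)
  calc ∑ t ∈ range (N + 1), γ ^ t * f t
      = ∑ t ∈ range N, γ ^ (t + 1) * f (t + 1) := by simp [sum_range_succ', hf0]
    _ ≤ ∑ t ∈ range N, γ ^ (t + 1) * (a * f t + δ) :=
        sum_le_sum fun t _ => mul_le_mul_of_nonneg_left (hrec t) (pow_nonneg hγ0 _)
    _ = γ * a * ∑ t ∈ range N, γ ^ t * f t + γ * δ * ∑ t ∈ range N, γ ^ t := by
        simp only [mul_sum, ← sum_add_distrib]
        exact sum_congr rfl fun t _ => by ring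
    _ ≤ γ * a * ∑ t ∈ range N, γ ^ t * f t + γ * δ / (1 - γ) := by gcongr

lemma discounted_sum_le_of_affine_recursion (hγ0 : 0 ≤ γ) (hγ1 : γ < 1) (hγa : γ * a < 1)
    (hδ : 0 ≤ δ) (hf : ∀ t, 0 ≤ f t) (hf0 : f 0 = 0) (hrec : ∀ t, f (t + 1) ≤ a * f t + δ)
    (N : ℕ) :
    ∑ t ∈ range N, γ ^ t * f t ≤ γ * δ / ((1 - γ) * (1 - γ * a)) := by
  have hmono : ∑ t ∈ range N, γ ^ t * f t ≤ ∑ t ∈ range (N + 1), γ ^ t * f t :=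
    sum_le_sum_of_subset_of_nonneg (range_subset_range.2 N.le_succ)
      fun t _ _ => mul_nonneg (pow_nonneg hγ0 t) (hf t)
  have hstep := discounted_sum_succ_le hγ0 hγ1 hδ hf0 hrec N
  rw [← div_div, le_div_iff₀ (sub_pos.2 hγa)]
  linarith

end DiscountedSum

theorem stmt_18_general (γ Kc Kp δ ℓ : ℝ) (hγ0 : 0 < γ) (hγ1 : γ < 1)
    (hKc : 0 ≤ Kc) (hγKp : γ * Kp < 1) (hδ : 0 ≤ δ)
    (hℓ : γ * Kc * δ / ((1 - γ) * (1 - γ * Kp)) < ℓ)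
    (e : ℕ → ℝ) (he0 : ∀ t, 0 ≤ e t) (he1 : e 1 = 0)
    (hrec : ∀ t ≥ 1, e (t + 1) ≤ Kp * e t + δ)
    (c : ℕ → ℝ) (hc : ∀ t ≥ 1, 0 ≤ c t ∧ c t ≤ Kc * e t)
    (J1 : ℝ) (hJ1 : ℓ ≤ J1) :
    (∑' t : ℕ, γ ^ t * c (t + 1)) ≤ γ * Kc * δ / ((1 - γ) * (1 - γ * Kp)) ∧
    (∑' t : ℕ, γ ^ t * c (t + 1)) < J1 := by
  have hpartial (N : ℕ) : ∑ t ∈ range N, γ ^ t * c (t + 1) ≤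
      γ * Kc * δ / ((1 - γ) * (1 - γ * Kp)) :=
    calc ∑ t ∈ range N, γ ^ t * c (t + 1)
        ≤ Kc * ∑ t ∈ range N, γ ^ t * e (t + 1) := by
          rw [mul_sum]
          exact sum_le_sum fun t _ => (mul_le_mul_of_nonneg_left (hc (t + 1) (by omega)).2
            (pow_nonneg hγ0.le t)).trans_eq (by ring)
      _ ≤ Kc * (γ * δ / ((1 - γ) * (1 - γ * Kp))) := by
          gcongr
          exact discounted_sum_le_of_affine_recursion (f := fun t => e (t + 1)) hγ0.le hγ1 hγKp hδ (fun t => he0 _) he1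
            (fun t => hrec (t + 1) (by omega)) N
      _ = γ * Kc * δ / ((1 - γ) * (1 - γ * Kp)) := by ring
  have hbound := Real.tsum_le_of_sum_range_le
    (fun t => mul_nonneg (pow_nonneg hγ0.le t) (hc (t + 1) (by omega)).1) hpartial
  exact ⟨hbound, hbound.trans_lt (hℓ.trans_le hJ1)⟩

/-- Corollary 3 (certainty threshold), simplified deterministic-bound form.
With the error recursion of Theorem 7 (error `e`, per-step estimation cost
`c t ≤ Kc * e t`), the never-collect strategy has total discounted cost
`J0 = ∑_{t=1}^∞ γ^{t-1} c_t ≤ B := γ Kc δ/((1-γ)(1-γKp))`; any strategy that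
collects at least once pays at least the collection cost `ℓ`, so if `ℓ > B`,
never collecting is (strictly) better. -/
theorem stmt_18 (γ Kc Kp δ ℓ : ℝ) (hγ0 : 0 < γ) (hγ1 : γ < 1)
    (hKc : 0 ≤ Kc) (hKp : 0 ≤ Kp) (hγKp : γ * Kp < 1) (hδ : 0 ≤ δ)
    (hℓ : γ * Kc * δ / ((1 - γ) * (1 - γ * Kp)) < ℓ)
    (e : ℕ → ℝ) (he0 : ∀ t, 0 ≤ e t) (he1 : e 1 = 0)
    (hrec : ∀ t ≥ 1, e (t + 1) ≤ Kp * e t + δ)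
    (c : ℕ → ℝ) (hc : ∀ t ≥ 1, 0 ≤ c t ∧ c t ≤ Kc * e t)
    (J1 : ℝ) (hJ1 : ℓ ≤ J1) :
    (∑' t : ℕ, γ ^ t * c (t + 1)) ≤ γ * Kc * δ / ((1 - γ) * (1 - γ * Kp)) ∧
    (∑' t : ℕ, γ ^ t * c (t + 1)) < J1 :=
  stmt_18_general γ Kc Kp δ ℓ hγ0 hγ1 hKc hγKp hδ hℓ e he0 he1 hrec c hc J1 hJ1
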